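/- arXiv:math/0504506 — 2 statements merged into one kernel-verified Lean document; each statement's English description precedes it below -/
import Mathlib

section
/- Let ξ be a finite (nonnegative) measure on Ω = {μ ∈ ℝᵏ : μᵢ ≥ 0 for all i} and fix z ∈ ℝᵏ with z₁ ≤ z₂ ≤ ⋯ ≤ z_k. Suppose ξ is invariant under coordinate permutations. For 1 ≤ i ≤ k let Ω⁽ⁱ⁾ = {μ ∈ Ω : μᵢ = 0}, and define N_i = ∫_{Ω⁽ⁱ⁾} exp(zᵀμ) dξ(μ) (assumed finite). Then N_i ≥ N_{i+1} for i = 1,…,k−1. -/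
/-!
Swapping the coordinates `i` and `i + 1` preserves `ξ` and maps the face `{μ (i + 1) = 0}` of the
orthant onto the face `{μ i = 0}`, so `N (i + 1)` is the integral over `{μ i = 0}` of
`exp (zᵀμ)` with `z i` and `z (i + 1)` exchanged. On that face `μ i = 0 ≤ μ (i + 1)`, so the
exchange replaces `z (i + 1) * μ (i + 1)` by the smaller `z i * μ (i + 1)`.
-/

open MeasureTheory Real

section PermInvariance

variable {ι β E : Type*} [MeasurableSpace β] [NormedAddCommGroup E] [NormedSpace ℝ E]

theorem measurableEmbedding_comp_perm (σ : Equiv.Perm ι) :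
    MeasurableEmbedding fun μ : ι → β => μ ∘ σ :=
  (MeasurableEquiv.arrowCongr' σ.symm (MeasurableEquiv.refl β)).measurableEmbedding

theorem setIntegral_comp_perm {ξ : Measure (ι → β)} {σ : Equiv.Perm ι}
    (hσ : ξ.map (fun μ : ι → β => μ ∘ σ) = ξ) (f : (ι → β) → E) (s : Set (ι → β)) :
    ∫ μ in (fun μ : ι → β => μ ∘ σ) ⁻¹' s, f (μ ∘ σ) ∂ξ = ∫ μ in s, f μ ∂ξ :=
  MeasurePreserving.setIntegral_preimage_emb
    ⟨(measurableEmbedding_comp_perm σ).measurable, hσ⟩ (measurableEmbedding_comp_perm σ) f s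

end PermInvariance

section OrthantFace

variable {ι : Type*}

/-- The face `Ω⁽ⁱ⁾ = {μ ∈ Ω | μ i = 0}` of the nonnegative orthant `Ω`. -/
def orthantFace (i : ι) : Set (ι → ℝ) := {μ | (∀ l, 0 ≤ μ l) ∧ μ i = 0}

theorem isClosed_orthantFace (i : ι) : IsClosed (orthantFace i) :=
  (isClosed_Ici (a := (0 : ι → ℝ))).inter (isClosed_eq (continuous_apply i) continuous_const)

theorem preimage_comp_perm_orthantFace (σ : Equiv.Perm ι) (i : ι) :
    (fun μ : ι → ℝ => μ ∘ σ) ⁻¹' orthantFace i = orthantFace (σ i) := by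
  ext μ
  exact and_congr_left fun _ => ⟨fun h l => by simpa using h (σ.symm l), fun h l => h (σ l)⟩

end OrthantFace

theorem sum_mul_comp_perm {ι : Type*} [Fintype ι] (z μ : ι → ℝ) (σ : Equiv.Perm ι) :
    ∑ l, z l * (μ ∘ σ) l = ∑ l, z (σ.symm l) * μ l := by
  simpa using Equiv.sum_comp σ fun l => z (σ.symm l) * μ l

theorem sum_mul_swap_le {ι : Type*} [Fintype ι] [DecidableEq ι] {z μ : ι → ℝ} {i j : ι}
    (hz : z i ≤ z j) (hμi : μ i = 0) (hμj : 0 ≤ μ j) :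
    ∑ l, z (Equiv.swap i j l) * μ l ≤ ∑ l, z l * μ l := by
  refine Finset.sum_le_sum fun l _ => ?_
  rcases eq_or_ne l i with rfl | hli
  · simp [hμi]
  rcases eq_or_ne l j with rfl | hlj
  · simpa using mul_le_mul_of_nonneg_right hz hμj
  · rw [Equiv.swap_apply_of_ne_of_ne hli hlj]

theorem numerator_antitone_general (k : ℕ) (ξ : Measure (Fin k → ℝ))
    (hinv : ∀ σ : Equiv.Perm (Fin k),
      Measure.map (fun μ : Fin k → ℝ => μ ∘ σ) ξ = ξ)
    (z : Fin k → ℝ) (hz : Monotone z)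
    (N : Fin k → ℝ)
    (hN : ∀ i : Fin k, N i =
      ∫ μ in {μ : Fin k → ℝ | (∀ l, 0 ≤ μ l) ∧ μ i = 0},
        Real.exp (∑ l, z l * μ l) ∂ξ)
    (hint : ∀ i : Fin k,
      IntegrableOn (fun μ : Fin k → ℝ => Real.exp (∑ l, z l * μ l))
        {μ : Fin k → ℝ | (∀ l, 0 ≤ μ l) ∧ μ i = 0} ξ)
    (i : Fin k) (h : (i : ℕ) + 1 < k) :
    N ⟨(i : ℕ) + 1, h⟩ ≤ N i := by
  set j : Fin k := ⟨(i : ℕ) + 1, h⟩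
  have hzij : z i ≤ z j := hz (Fin.le_def.2 (Nat.le_succ _))
  have hface : (fun μ : Fin k → ℝ => μ ∘ Equiv.swap i j) ⁻¹' orthantFace j = orthantFace i := by
    rw [preimage_comp_perm_orthantFace, Equiv.swap_apply_right]
  rw [hN, hN]
  change ∫ μ in orthantFace j, _ ∂ξ ≤ ∫ μ in orthantFace i, _ ∂ξ
  rw [← setIntegral_comp_perm (hinv (Equiv.swap i j)), hface]
  refine integral_mono_of_nonneg (.of_forall fun _ => (exp_pos _).le) (hint i)
    (ae_restrict_of_forall_mem (isClosed_orthantFace i).measurableSet fun μ ⟨hμ, hμi⟩ => ?_)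
  dsimp only
  rw [sum_mul_comp_perm, Equiv.symm_swap]
  exact exp_le_exp.2 (sum_mul_swap_le hzij hμi (hμ j))

/-- Lemma 3.1 (numerator monotonicity): for a permutation-invariant finite measure `ξ`
on `Ω = {μ : ∀ i, μ i ≥ 0}` and `z` with nondecreasing coordinates,
`N i = ∫_{Ω ∩ {μ i = 0}} exp(zᵀμ) dξ` satisfies `N i ≥ N (i+1)`. -/
theorem numerator_antitone (k : ℕ) (ξ : Measure (Fin k → ℝ)) [IsFiniteMeasure ξ]
    (hinv : ∀ σ : Equiv.Perm (Fin k),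
      Measure.map (fun μ : Fin k → ℝ => μ ∘ σ) ξ = ξ)
    (hΩ : ξ {μ : Fin k → ℝ | ¬ ∀ l, 0 ≤ μ l} = 0)
    (z : Fin k → ℝ) (hz : Monotone z)
    (N : Fin k → ℝ)
    (hN : ∀ i : Fin k, N i =
      ∫ μ in {μ : Fin k → ℝ | (∀ l, 0 ≤ μ l) ∧ μ i = 0},
        Real.exp (∑ l, z l * μ l) ∂ξ)
    (hint : ∀ i : Fin k,
      IntegrableOn (fun μ : Fin k → ℝ => Real.exp (∑ l, z l * μ l))
        {μ : Fin k → ℝ | (∀ l, 0 ≤ μ l) ∧ μ i = 0} ξ)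
    (i : Fin k) (h : (i : ℕ) + 1 < k) :
    N ⟨(i : ℕ) + 1, h⟩ ≤ N i :=
  numerator_antitone_general k ξ hinv z hz N hN hint i h
end

section
/- Let C₁ < C₂ and consider the k=2 step-up procedure ψ_SU. Then there exist points z*, z̄ with z*₁ < z*₂, z̄₁ + z̄₂ = z*₁ + z*₂ and (z*₁ + z*₂)/2 ≤ max(z̄₁, z̄₂) ≤ z*₂, such that ψ_SU rejects nothing at z* (ψ_SU(z*) = (0,0)) but rejects the hypothesis corresponding to the larger coordinate at z̄. -/
/-- The step-up procedure for `k = 2` with critical values `C₁ < C₂`: reject both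
hypotheses iff `min(z₁,z₂) > C₁`; otherwise reject the hypothesis with the larger
coordinate iff `max(z₁,z₂) > C₂`; otherwise reject nothing. -/
noncomputable def stepUp (C₁ C₂ z₁ z₂ : ℝ) : ℝ × ℝ :=
  if C₁ < min z₁ z₂ then (1, 1)
  else if C₂ < max z₁ z₂ then (if z₂ < z₁ then (1, 0) else (0, 1))
  else (0, 0)

/-- Violation of the necessary admissibility condition (Corollary 4.4, `k = 2`):
there are points `z*` (with `z*₁ < z*₂`) and `z̄` on the same line
`z₁ + z₂ = const`, with `(z*₁+z*₂)/2 ≤ max(z̄₁,z̄₂) ≤ z*₂`, such that step-up rejects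
nothing at `z*` but rejects the hypothesis corresponding to the larger coordinate
at `z̄`. -/
theorem stepUp_violates_necessary_condition (C₁ C₂ : ℝ) (hC : C₁ < C₂) :
    ∃ zstar zbar : ℝ × ℝ,
      zstar.1 < zstar.2 ∧
      zbar.1 + zbar.2 = zstar.1 + zstar.2 ∧
      (zstar.1 + zstar.2) / 2 ≤ max zbar.1 zbar.2 ∧
      max zbar.1 zbar.2 ≤ zstar.2 ∧
      stepUp C₁ C₂ zstar.1 zstar.2 = (0, 0) ∧
      (if zbar.1 ≤ zbar.2 then (stepUp C₁ C₂ zbar.1 zbar.2).2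
        else (stepUp C₁ C₂ zbar.1 zbar.2).1) = 1 := by
  set ε := (C₂ - C₁) / 4 with hε
  have hε0 : 0 < ε := by simp [hε]; linarith
  refine ⟨(C₁ - ε, C₂ - ε), ((C₁ + C₂) / 2 - ε, (C₁ + C₂) / 2 - ε), by simp; linarith,
    by ring, by simp; linarith, by simp; linarith, ?_, ?_⟩
  · unfold stepUp
    dsimp only
    rw [if_neg (by rw [not_lt]; exact le_trans (min_le_left _ _) (by linarith)),
      if_neg (by rw [not_lt, max_le_iff]; constructor <;> linarith)]
  · unfold stepUp
    dsimp only
    rw [if_pos le_rfl, if_pos (by rw [lt_min_iff]; constructor <;> linarith)]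
end
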